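/- Let E/F be a cyclic cubic Galois extension with generator σ, and let z = a + by + cy² be an element of the cyclic algebra D = (E, σ, γ) (where y³ = γ, ya = a^σ y). With the adjoint z^# = (a^# − γ b^σ c^{σ²}) + (γ c^{σ#} − a^{σ²} b)y + (b^{σ²#} − a^σ c)y², where e^# = e^σ e^{σ²} for e ∈ E, and the traces T(z) = T_{E/F}(a), T(z^#) = T_{E/F}(a^# − γ b^σ c^{σ²}), one has z² = T(z)·z − T(z^#)·1 + z^#. -/

import Mathlib

/-- Let `E/F` be a cyclic cubic Galois extension with generator `σ`, and let
`D = (E, σ, γ)` be the cyclic algebra with `y³ = γ`, `y a = σ(a) y`,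
presented by a ring hom `ι : E →+* D` and element `y`. For
`z = a + by + cy²`, with the adjoint
`z^# = (a^# - γ b^σ c^{σ²}) + (γ (c^σ)^# - a^{σ²} b) y + ((b^{σ²})^# - a^σ c) y²`
(where `e^# = σ e * σ² e`), `T(z) = Tr(a)` and `T(z^#)` the trace of the
`E`-component of `z^#`, one has `z² = T(z)·z - T(z^#)·1 + z^#`. -/
theorem stmt_15 (F E D : Type*) [Field F] [Field E] [Algebra F E]
    [IsGalois F E] (hdeg : Module.finrank F E = 3)
    (σ : E ≃ₐ[F] E) (hgen : ∀ τ : E ≃ₐ[F] E, τ ∈ Subgroup.zpowers σ)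
    (γ : F) (hγ : γ ≠ 0)
    [Ring D] (ι : E →+* D) (y : D)
    (hy3 : y ^ 3 = ι (algebraMap F E γ))
    (hrel : ∀ e : E, y * ι e = ι (σ e) * y)
    (a b c : E) :
    (ι a + ι b * y + ι c * y ^ 2) * (ι a + ι b * y + ι c * y ^ 2)
      = ι (a + σ a + (σ ^ 2) a) * (ι a + ι b * y + ι c * y ^ 2)
        - ι ((σ a * (σ ^ 2) a - algebraMap F E γ * (σ b * (σ ^ 2) c))
            + σ (σ a * (σ ^ 2) a - algebraMap F E γ * (σ b * (σ ^ 2) c))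
            + (σ ^ 2) (σ a * (σ ^ 2) a - algebraMap F E γ * (σ b * (σ ^ 2) c)))
        + (ι (σ a * (σ ^ 2) a - algebraMap F E γ * (σ b * (σ ^ 2) c))
            + ι (algebraMap F E γ * (σ (σ c) * (σ ^ 2) (σ c)) - (σ ^ 2) a * b) * y
            + ι (σ ((σ ^ 2) b) * (σ ^ 2) ((σ ^ 2) b) - σ a * c) * y ^ 2) := by

  have hfd : FiniteDimensional F E := FiniteDimensional.of_finrank_pos (by rw [hdeg]; norm_num)
  have hcard : Fintype.card (E ≃ₐ[F] E) = 3 := by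
    rw [Fintype.card_eq_nat_card, IsGalois.card_aut_eq_finrank, hdeg]
  have hσ3 : σ ^ 3 = 1 := by rw [← hcard]; exact pow_card_eq_one
  have h3 : ∀ e : E, σ (σ (σ e)) = e := by
    intro e
    have := congrArg (fun τ : E ≃ₐ[F] E => τ e) hσ3
    simpa [pow_succ, AlgEquiv.mul_apply] using this
  have hpow : ∀ e : E, (σ ^ 2) e = σ (σ e) := by
    intro e
    simp [pow_succ, AlgEquiv.mul_apply]
  set γ' := algebraMap F E γ with hγ'
  have hσγ : σ γ' = γ' := σ.commutes γ
  have hy2 : ∀ e : E, y ^ 2 * ι e = ι (σ (σ e)) * y ^ 2 := by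
    intro e
    rw [sq, mul_assoc, hrel, ← mul_assoc, hrel, mul_assoc, ← sq]
  have h1 : ∀ e f : E, (ι e * y) * ι f = ι (e * σ f) * y := by
    intro e f
    rw [mul_assoc, hrel, ← mul_assoc, ← map_mul]
  have h2 : ∀ e f : E, (ι e * y ^ 2) * ι f = ι (e * σ (σ f)) * y ^ 2 := by
    intro e f
    rw [mul_assoc, hy2, ← mul_assoc, ← map_mul]
  have hyy : y * y = y ^ 2 := (sq y).symm
  have hy2y : y ^ 2 * y = ι γ' := by rw [← pow_succ, hy3]
  have hy22 : y ^ 2 * y ^ 2 = ι γ' * y := by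
    rw [← pow_add]
    show y ^ (3 + 1) = _
    rw [pow_succ, hy3]
  -- products of basis terms
  have p11 : ∀ e f : E, (ι e * y) * (ι f * y) = ι (e * σ f) * y ^ 2 := by
    intro e f
    rw [← mul_assoc, h1, mul_assoc, hyy]
  have p12 : ∀ e f : E, (ι e * y) * (ι f * y ^ 2) = ι (e * σ f * γ') := by
    intro e f
    rw [← mul_assoc, h1, mul_assoc, show y * y ^ 2 = y ^ 3 from (pow_succ' y 2).symm, hy3, ← map_mul]
  have p21 : ∀ e f : E, (ι e * y ^ 2) * (ι f * y) = ι (e * σ (σ f) * γ') := by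
    intro e f
    rw [← mul_assoc, h2, mul_assoc, hy2y, ← map_mul]
  have p22 : ∀ e f : E, (ι e * y ^ 2) * (ι f * y ^ 2) = ι (e * σ (σ f) * γ') * y := by
    intro e f
    rw [← mul_assoc, h2, mul_assoc, hy22, ← mul_assoc, ← map_mul]
  have p01 : ∀ e f : E, ι e * (ι f * y) = ι (e * f) * y := by
    intro e f
    rw [← mul_assoc, ← map_mul]
  have p02 : ∀ e f : E, ι e * (ι f * y ^ 2) = ι (e * f) * y ^ 2 := by
    intro e f
    rw [← mul_assoc, ← map_mul]
  have p10 : ∀ e f : E, (ι e * y) * ι f = ι (e * σ f) * y := h1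
  have p20 : ∀ e f : E, (ι e * y ^ 2) * ι f = ι (e * σ (σ f)) * y ^ 2 := h2
  -- normal form of LHS
  have hL : (ι a + ι b * y + ι c * y ^ 2) * (ι a + ι b * y + ι c * y ^ 2)
      = ι (a * a + b * σ c * γ' + c * σ (σ b) * γ')
        + ι (a * b + b * σ a + c * σ (σ c) * γ') * y
        + ι (a * c + b * σ b + c * σ (σ a)) * y ^ 2 := by
    rw [add_mul, add_mul, mul_add, mul_add, mul_add, mul_add, mul_add, mul_add,
      ← map_mul ι a a, p01, p02, p10, p11, p12, p21, p22, p20]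
    rw [map_add, map_add, map_add, map_add, map_add, map_add,
      add_mul, add_mul, add_mul, add_mul]
    ring_nf
    abel
  rw [hL]
  -- normal form of RHS
  rw [mul_add, mul_add, ← map_mul, p01, p02]
  -- now everything is combination of ι _ , ι _ * y, ι _ * y^2 on RHS
  have key : ∀ A0 A1 A2 B0 B1 B2 S : E,
      A0 = B0 - S + (σ a * (σ ^ 2) a - γ' * (σ b * (σ ^ 2) c)) →
      A1 = B1 + (γ' * (σ (σ c) * (σ ^ 2) (σ c)) - (σ ^ 2) a * b) →
      A2 = B2 + (σ ((σ ^ 2) b) * (σ ^ 2) ((σ ^ 2) b) - σ a * c) →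
      ι A0 + ι A1 * y + ι A2 * y ^ 2
        = ι B0 + ι B1 * y + ι B2 * y ^ 2 - ι S
          + (ι (σ a * (σ ^ 2) a - γ' * (σ b * (σ ^ 2) c))
            + ι (γ' * (σ (σ c) * (σ ^ 2) (σ c)) - (σ ^ 2) a * b) * y
            + ι (σ ((σ ^ 2) b) * (σ ^ 2) ((σ ^ 2) b) - σ a * c) * y ^ 2) := by
    rintro A0 A1 A2 B0 B1 B2 S rfl rfl rfl
    rw [map_add, map_sub, map_add, map_add, add_mul, add_mul]
    abel
  apply key
  · simp only [hpow, map_sub, map_mul, map_add, hσγ, h3]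
    ring
  · simp only [hpow, map_sub, map_mul, map_add, hσγ, h3]
    ring
  · simp only [hpow, map_sub, map_mul, map_add, hσγ, h3]
    ring
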